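/- Let n ≥ 1 and let D = (1/(2n−1)!!)·∏_{k=1}^{n} (sinh r·(d/dr) + (2k−1)·cosh r), the composition taken with smaller values of k to the left (the k = 1 factor applied last). Then for every smooth function f : ℝ → ℂ and every r ∈ ℝ with r ≠ 0: D applied to the function s ↦ f″(s) + 2n·(cosh s/sinh s)·f′(s), evaluated at r, equals (Df)″(r) − n²·(Df)(r). -/

import Mathlib

/-- The factor `A_k` given by `(A_k g)(r) = sinh r · g'(r) + (2k-1) cosh r · g(r)`. -/
noncomputable def Ahyp (k : ℕ) (g : ℝ → ℂ) : ℝ → ℂ :=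
  fun r => (Real.sinh r : ℂ) * deriv g r + (2 * (k : ℂ) - 1) * (Real.cosh r : ℂ) * g r

/-- `AhypChain n f = A₁(A₂(⋯(Aₙ f)⋯))`, the composition with smaller indices to
the left. -/
noncomputable def AhypChain : ℕ → (ℝ → ℂ) → (ℝ → ℂ)
  | 0, f => f
  | n + 1, f => AhypChain n (Ahyp (n + 1) f)

/-- The shift operator `D = (1/(2n-1)!!) ∏_{k=1}^n (sinh r d/dr + (2k-1) cosh r)`. -/
noncomputable def Dhyp (n : ℕ) (f : ℝ → ℂ) : ℝ → ℂ :=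
  fun r => ((Nat.doubleFactorial (2 * n - 1) : ℂ))⁻¹ * AhypChain n f r

/-! Each factor intertwines radial Laplacians of consecutive odd dimensions: on `r ≠ 0`,
`A_{k+1} ∘ (L_{k+1} + c) = (L_k + c - (2k+1)) ∘ A_{k+1}`, where `L_m = d²/dr² + 2m coth r d/dr`,
by a direct computation. Composing the factors `k = n, …, 1` turns `L_n` into
`d²/dr² - ∑ (2k-1) = d²/dr² - n²`. Since `L_m g` is only meaningful off `r = 0`, the composition
step uses that each `A_k` is a local operator. -/

open Real Set
open scoped ContDiff

/-- The radial part of the Laplacian of the hyperbolic space `H^{2m+1}`. -/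
noncomputable def radialLaplacian (m : ℕ) (g : ℝ → ℂ) : ℝ → ℂ :=
  fun s => deriv (deriv g) s + 2 * m * ((cosh s : ℂ) / (sinh s : ℂ)) * deriv g s

theorem hasDerivAt_ofReal_sinh (x : ℝ) : HasDerivAt (fun t : ℝ => (sinh t : ℂ)) (cosh x) x :=
  (hasDerivAt_sinh x).ofReal_comp

theorem hasDerivAt_ofReal_cosh (x : ℝ) : HasDerivAt (fun t : ℝ => (cosh t : ℂ)) (sinh x) x :=
  (hasDerivAt_cosh x).ofReal_comp

section

variable {g : ℝ → ℂ}

theorem ContDiff.hasDerivAt_deriv (hg : ContDiff ℝ ∞ g) (x : ℝ) : HasDerivAt g (deriv g x) x :=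
  ((hg.differentiable (by simp)) x).hasDerivAt

theorem ContDiff.contDiff_deriv (hg : ContDiff ℝ ∞ g) : ContDiff ℝ ∞ (deriv g) :=
  (contDiff_infty_iff_deriv.1 hg).2

theorem ContDiff.Ahyp (hg : ContDiff ℝ ∞ g) (k : ℕ) : ContDiff ℝ ∞ (Ahyp k g) :=
  ((Complex.ofRealCLM.contDiff.comp contDiff_sinh).mul hg.contDiff_deriv).add
    ((contDiff_const.mul (Complex.ofRealCLM.contDiff.comp contDiff_cosh)).mul hg)

theorem Ahyp_eqOn {s : Set ℝ} (hs : IsOpen s) {g₁ g₂ : ℝ → ℂ} (h : EqOn g₁ g₂ s) (k : ℕ) :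
    EqOn (Ahyp k g₁) (Ahyp k g₂) s := fun x hx => by
  simp only [Ahyp, (h.eventuallyEq_of_mem (hs.mem_nhds hx)).deriv_eq, h hx]

theorem AhypChain_eqOn {s : Set ℝ} (hs : IsOpen s) {g₁ g₂ : ℝ → ℂ} (h : EqOn g₁ g₂ s) :
    ∀ n, EqOn (AhypChain n g₁) (AhypChain n g₂) s
  | 0 => h
  | n + 1 => AhypChain_eqOn hs (Ahyp_eqOn hs h (n + 1)) n

theorem deriv_Ahyp (hg : ContDiff ℝ ∞ g) (k : ℕ) :
    deriv (Ahyp k g) = fun s => sinh s * deriv (deriv g) s + 2 * k * cosh s * deriv g s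
      + (2 * k - 1) * sinh s * g s := by
  funext x
  exact (((hasDerivAt_ofReal_sinh x).mul (hg.contDiff_deriv.hasDerivAt_deriv x)).add
    (((hasDerivAt_ofReal_cosh x).const_mul (2 * (k : ℂ) - 1)).mul (hg.hasDerivAt_deriv x))
    ).deriv.trans (by ring)

theorem hasDerivAt_deriv_Ahyp (hg : ContDiff ℝ ∞ g) (k : ℕ) (x : ℝ) :
    HasDerivAt (deriv (Ahyp k g)) (cosh x * deriv (deriv g) x + sinh x * deriv (deriv (deriv g)) x
      + 2 * k * (sinh x * deriv g x + cosh x * deriv (deriv g) x)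
      + (2 * k - 1) * (cosh x * g x + sinh x * deriv g x)) x := by
  have hg1 := hg.contDiff_deriv
  rw [deriv_Ahyp hg]
  exact ((((hasDerivAt_ofReal_sinh x).mul (hg1.contDiff_deriv.hasDerivAt_deriv x)).add
    (((hasDerivAt_ofReal_cosh x).const_mul (2 * (k : ℂ))).mul (hg1.hasDerivAt_deriv x))).add
    (((hasDerivAt_ofReal_sinh x).const_mul (2 * (k : ℂ) - 1)).mul (hg.hasDerivAt_deriv x))
    ).congr_deriv (by ring)

theorem hasDerivAt_radialLaplacian (hg : ContDiff ℝ ∞ g) (m : ℕ) {x : ℝ} (hx : x ≠ 0) :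
    HasDerivAt (radialLaplacian m g) (deriv (deriv (deriv g)) x
      + 2 * m * ((sinh x * sinh x - cosh x * cosh x) / sinh x ^ 2 * deriv g x
        + cosh x / sinh x * deriv (deriv g) x)) x := by
  have hg1 := hg.contDiff_deriv
  have hsinh : (sinh x : ℂ) ≠ 0 := Complex.ofReal_ne_zero.2 (sinh_ne_zero.2 hx)
  exact ((hg1.contDiff_deriv.hasDerivAt_deriv x).add
    ((((hasDerivAt_ofReal_cosh x).div (hasDerivAt_ofReal_sinh x) hsinh).const_mul
      (2 * (m : ℂ))).mul (hg1.hasDerivAt_deriv x))).congr_deriv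
    (by simp only [Pi.div_apply]; ring)

theorem Ahyp_succ_radialLaplacian (hg : ContDiff ℝ ∞ g) (k : ℕ) (c : ℂ) {x : ℝ} (hx : x ≠ 0) :
    Ahyp (k + 1) (fun s => radialLaplacian (k + 1) g s + c * g s) x
      = radialLaplacian k (Ahyp (k + 1) g) x + (c - (2 * k + 1)) * Ahyp (k + 1) g x := by
  have hsinh : (sinh x : ℂ) ≠ 0 := Complex.ofReal_ne_zero.2 (sinh_ne_zero.2 hx)
  have hF : HasDerivAt (fun s => radialLaplacian (k + 1) g s + c * g s) _ x :=
    (hasDerivAt_radialLaplacian hg (k + 1) hx).add ((hg.hasDerivAt_deriv x).const_mul c)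
  rw [Ahyp, hF.deriv, radialLaplacian.eq_1 k, (hasDerivAt_deriv_Ahyp hg (k + 1) x).deriv]
  simp only [Ahyp, radialLaplacian, deriv_Ahyp hg]
  push_cast at hsinh ⊢
  field_simp
  ring

theorem AhypChain_radialLaplacian (k : ℕ) (hg : ContDiff ℝ ∞ g) (c : ℂ) {r : ℝ}
    (hr : r ≠ 0) :
    AhypChain k (fun s => radialLaplacian k g s + c * g s) r
      = deriv (deriv (AhypChain k g)) r + (c - k ^ 2) * AhypChain k g r := by
  induction k generalizing g c with
  | zero => simp [AhypChain, radialLaplacian]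
  | succ k ih =>
    have hstep : EqOn (Ahyp (k + 1) (fun s => radialLaplacian (k + 1) g s + c * g s))
        (fun s => radialLaplacian k (Ahyp (k + 1) g) s
          + (c - (2 * k + 1)) * Ahyp (k + 1) g s) {0}ᶜ :=
      fun x hx => Ahyp_succ_radialLaplacian hg k c hx
    rw [AhypChain, AhypChain_eqOn isOpen_compl_singleton hstep k hr, ih (hg.Ahyp (k + 1)),
      AhypChain]
    push_cast
    ring

end

theorem stmt_2_general (n : ℕ) (f : ℝ → ℂ) (hf : ContDiff ℝ (⊤ : ℕ∞) f)
    (r : ℝ) (hr : r ≠ 0) :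
    Dhyp n (fun s => deriv (deriv f) s
        + 2 * (n : ℂ) * ((Real.cosh s : ℂ) / (Real.sinh s : ℂ)) * deriv f s) r
      = deriv (deriv (Dhyp n f)) r - (n : ℂ) ^ 2 * Dhyp n f r := by
  have h := AhypChain_radialLaplacian n hf 0 hr
  simp only [zero_mul, add_zero, zero_sub, radialLaplacian] at h
  unfold Dhyp
  simp only [deriv_const_mul_field', h]
  ring

/-- Intertwining property of `D` with the radial hyperbolic Laplacian on
`H^{2n+1}`. -/
theorem stmt_2 (n : ℕ) (hn : 1 ≤ n) (f : ℝ → ℂ) (hf : ContDiff ℝ (⊤ : ℕ∞) f)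
    (r : ℝ) (hr : r ≠ 0) :
    Dhyp n (fun s => deriv (deriv f) s
        + 2 * (n : ℂ) * ((Real.cosh s : ℂ) / (Real.sinh s : ℂ)) * deriv f s) r
      = deriv (deriv (Dhyp n f)) r - (n : ℂ) ^ 2 * Dhyp n f r :=
  stmt_2_general n f hf r hr
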